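/- arXiv:1112.0270 — 2 statements merged into one kernel-verified Lean document; each statement's English description precedes it below -/
import Mathlib

section
/- Let n ≥ 1 be an integer, let α_1,…,α_n, β, ε be real numbers with ε ≠ 0, let 1 ≤ i ≤ n, and let H_i be the ε-perturbed cascade rate matrix. Define the vector q ∈ ℝ^n by q(j) = 0 for j < i and q(j) = π_j (−1/ε)^{j−1} for j ≥ i, where π_j = ∏_{l=1}^j α_l. Then H_i q = −(β+ε) q; that is, q is an eigenvector of H_i associated with the eigenvalue −(β+ε). -/
/-!
Row `j` of `H_i` applied to `q` reads `d_j q_j + α_j q_{j-1}`, where `d_j` is the diagonal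
entry and `q_0 = 0`. Below `i` both terms vanish; at `j = i` the subdiagonal term vanishes and
`d_i = -(β+ε)`; above `i` the factor `(-1/ε)^{j-1}` is chosen so that `α_j q_{j-1} = -ε q_j`,
which turns `-β q_j` into `-(β+ε) q_j`.
-/

open Matrix

/-- `πⱼ = ∏_{l=1}^j α_l` (1-based product of activation rates). -/
noncomputable def piProd (α : ℕ → ℝ) (j : ℕ) : ℝ := ∏ l ∈ Finset.Icc 1 j, α l

/-- The ε-perturbed cascade rate matrix `H_i` (1-based index `i` of the perturbed component):
`H_i (j,j) = -β` for `j ≠ i`, `H_i (i,i) = -(β+ε)`, `H_i (j+1, j) = α (j+1)`, zeros elsewhere. -/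
noncomputable def perturbedCascadeMatrix (n : ℕ) (α : ℕ → ℝ) (β ε : ℝ) (i : ℕ) :
    Matrix (Fin n) (Fin n) ℝ :=
  fun r c =>
    if r = c then (if r.val + 1 = i then -(β + ε) else -β)
    else if r.val = c.val + 1 then α (r.val + 1)
    else 0

/-- The eigenvector `q₁` of `H_i` (first column of `Q_i`), with 1-based entries
`q₁(j) = 0` for `j < i` and `q₁(j) = πⱼ (-1/ε)^{j-1}` for `j ≥ i`. -/
noncomputable def qOne (n : ℕ) (α : ℕ → ℝ) (ε : ℝ) (i : ℕ) : Fin n → ℝ :=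
  fun r =>
    if r.val + 1 < i then 0 else piProd α (r.val + 1) * (-1 / ε) ^ r.val

/-- The generalised eigenvector `v_k` of `H_i` associated with `-β` (1-based entries `j`):
if `i ≤ k` then `v_k(j) = 0` for `j ≤ k` and `v_k(j) = -πⱼ (-1/ε)^{j-k}` for `j > k`;
if `i > k` then `v_k(k) = π_k`, `v_k(j) = 0` for other `j < i`, and
`v_k(j) = -πⱼ (-1/ε)^{j-k}` for `j ≥ i`. -/
noncomputable def genEigVec (n : ℕ) (α : ℕ → ℝ) (ε : ℝ) (i k : ℕ) : Fin n → ℝ :=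
  fun r =>
    let j := r.val + 1
    if i ≤ k then
      (if j ≤ k then 0 else -(piProd α j) * (-1 / ε) ^ (j - k))
    else
      if j = k then piProd α k
      else if j < i then 0
      else -(piProd α j) * (-1 / ε) ^ (j - k)

/-- The generalised-eigenvector matrix `Q_i`: its first column is `q₁` and, for each
`1 ≤ k ≤ n-1`, its column `n-k+1` is `v_k`. -/
noncomputable def Qmat (n : ℕ) (α : ℕ → ℝ) (ε : ℝ) (i : ℕ) : Matrix (Fin n) (Fin n) ℝ :=
  fun r c =>
    if c.val = 0 then qOne n α ε i r
    else genEigVec n α ε i (n - (c.val + 1) + 1) r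

def lowerBidiagonal {R : Type*} [Zero R] {n : ℕ} (d s : Fin n → R) : Matrix (Fin n) (Fin n) R :=
  of fun r c => if r = c then d r else if r.val = c.val + 1 then s r else 0

theorem lowerBidiagonal_mulVec_apply {R : Type*} [NonUnitalNonAssocSemiring R] {n : ℕ}
    (d s : Fin n → R) (f : ℕ → R) (hf : f 0 = 0) (r : Fin n) :
    (lowerBidiagonal d s *ᵥ fun c => f (c.val + 1)) r = d r * f (r.val + 1) + s r * f r.val := by
  have hterm : ∀ c : Fin n, lowerBidiagonal d s r c * f (c.val + 1) =
      (if r = c then d r * f (r.val + 1) else 0) +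
        (if r.val = c.val + 1 then s r * f r.val else 0) := by
    intro c
    by_cases hrc : r = c
    · subst hrc; simp [lowerBidiagonal]
    · rw [lowerBidiagonal, of_apply, if_neg hrc, if_neg hrc, zero_add]
      split_ifs with h
      · rw [h]
      · rw [zero_mul]
  simp only [mulVec, dotProduct, hterm, Finset.sum_add_distrib, Finset.sum_ite_eq,
    Finset.mem_univ, if_true]
  congr 1
  obtain ⟨_ | m, hm⟩ := r
  · simp [hf]
  · have hpred : ∀ c : Fin n, m + 1 = c.val + 1 ↔ c = ⟨m, by omega⟩ := by
      simp [Fin.ext_iff, eq_comm]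
    simp only [hpred, Finset.sum_ite_eq', Finset.mem_univ, if_true]

theorem piProd_succ (α : ℕ → ℝ) (j : ℕ) : piProd α (j + 1) = piProd α j * α (j + 1) :=
  Finset.prod_Icc_succ_top (Nat.le_add_left 1 j) α

/-- `qOne` with 1-based indexing, extended to all of `ℕ`; its value at `0` is the zero
boundary term that lets the first row of the cascade matrix be treated like the others. -/
noncomputable def cascadeEigenseq (α : ℕ → ℝ) (ε : ℝ) (i j : ℕ) : ℝ :=
  if j < i then 0 else piProd α j * (-1 / ε) ^ (j - 1)

theorem qOne_eq_cascadeEigenseq (n : ℕ) (α : ℕ → ℝ) (ε : ℝ) (i : ℕ) :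
    qOne n α ε i = fun r => cascadeEigenseq α ε i (r.val + 1) := by
  ext r
  simp [qOne, cascadeEigenseq]

section cascadeEigenseq

variable {α : ℕ → ℝ} {ε : ℝ} {i : ℕ}

theorem cascadeEigenseq_of_lt {j : ℕ} (h : j < i) : cascadeEigenseq α ε i j = 0 :=
  if_pos h

theorem cascadeEigenseq_succ (hε : ε ≠ 0) (hi : 1 ≤ i) {j : ℕ} (hij : i ≤ j) :
    α (j + 1) * cascadeEigenseq α ε i j = -ε * cascadeEigenseq α ε i (j + 1) := by
  obtain ⟨k, rfl⟩ : ∃ k, j = k + 1 := ⟨j - 1, by omega⟩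
  simp only [cascadeEigenseq, if_neg (show ¬k + 1 < i by omega),
    if_neg (show ¬k + 1 + 1 < i by omega), piProd_succ α (k + 1), Nat.add_sub_cancel, pow_succ]
  field_simp

theorem cascadeEigenseq_row (hε : ε ≠ 0) (hi : 1 ≤ i) (β : ℝ) (j : ℕ) :
    (if j + 1 = i then -(β + ε) else -β) * cascadeEigenseq α ε i (j + 1) +
      α (j + 1) * cascadeEigenseq α ε i j = -(β + ε) * cascadeEigenseq α ε i (j + 1) := by
  rcases lt_trichotomy (j + 1) i with hlt | heq | hgt
  · simp [cascadeEigenseq_of_lt hlt, cascadeEigenseq_of_lt (j.lt_succ_self.trans hlt)]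
  · simp [heq, cascadeEigenseq_of_lt (show j < i by omega)]
  · rw [if_neg hgt.ne', cascadeEigenseq_succ hε hi (by omega)]
    ring

end cascadeEigenseq

theorem perturbedCascadeMatrix_eq_lowerBidiagonal (n : ℕ) (α : ℕ → ℝ) (β ε : ℝ) (i : ℕ) :
    perturbedCascadeMatrix n α β ε i =
      lowerBidiagonal (fun r => if r.val + 1 = i then -(β + ε) else -β) (fun r => α (r.val + 1)) :=
  rfl

theorem perturbed_cascade_eigenvector_general
    (n : ℕ) (α : ℕ → ℝ) (β ε : ℝ) (hε : ε ≠ 0)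
    (i : ℕ) (hi : 1 ≤ i) :
    perturbedCascadeMatrix n α β ε i *ᵥ qOne n α ε i = (-(β + ε)) • qOne n α ε i := by
  ext r
  rw [perturbedCascadeMatrix_eq_lowerBidiagonal, qOne_eq_cascadeEigenseq,
    lowerBidiagonal_mulVec_apply _ _ _ (cascadeEigenseq_of_lt hi)]
  exact cascadeEigenseq_row hε hi β r.val

/-- `q₁` is an eigenvector of `H_i` associated with the eigenvalue `-(β+ε)`. -/
theorem perturbed_cascade_eigenvector
    (n : ℕ) (hn : 1 ≤ n) (α : ℕ → ℝ) (β ε : ℝ) (hε : ε ≠ 0)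
    (i : ℕ) (hi : 1 ≤ i) (hin : i ≤ n) :
    perturbedCascadeMatrix n α β ε i *ᵥ qOne n α ε i = (-(β + ε)) • qOne n α ε i :=
  perturbed_cascade_eigenvector_general n α β ε hε i hi
end

section
/- Let n ≥ 1 be an integer and let α_1,…,α_{n+1}, β, ε be real numbers with β ≠ 0, ε ≠ 0, and β + ε ≠ 0. Suppose x : ℝ → ℝ satisfies x(0) = 0 and, for every real t, x is differentiable at t with derivative α_{n+1} · ((∏_{j=1}^n α_j)/β^n) · P(n, βt) − (β+ε) x(t), where P is the normalised lower incomplete gamma function. Then for every real t, x(t) = (α_{n+1}/(β+ε)) · ((∏_{j=1}^n α_j)/β^n) · ( 1 − e^{−βt} [ (−β/ε)^n e^{−εt} + ∑_{k=0}^{n−1} ((ε^{n−k} − (−β)^{n−k}) (βt)^k) / (ε^{n−k} k!) ] ). -/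
/-!
Write `e_n(u) = ∑_{k<n} u^k/k!`. Since `e_{n+1}' = e_n`, the function `-e^{-u} e_n(u)` is an
antiderivative of `e^{-u} u^{n-1}/(n-1)!`, so `P(n, u) = 1 - e^{-u} e_n(u)`.
With `r = -β/ε`, the bracket of the closed form is `F(t) = e_n(βt) + r^n (e^{-εt} - e_n(-εt))`.
Because `r · (-εt) = βt` and `ε r = -β`, the top-order Taylor terms cancel on differentiation and
`F' = (β + ε) e_n(βt) - ε F`. This is exactly what makes `c (1 - e^{-βt} F)`, with
`c = α_{n+1} ∏_{j ≤ n} α_j / (β^n (β + ε))`, a solution of the ODE. It vanishes at `0`, and the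
right-hand side of a linear ODE is Lipschitz, so its solutions are determined by their initial
value.
-/

/-- The normalised lower incomplete gamma function `P(n, x)` for integer `n ≥ 1`:
`P(n, x) = (1/(n-1)!) ∫_0^x e^{-s} s^{n-1} ds`. -/
noncomputable def normIncGamma (n : ℕ) (x : ℝ) : ℝ :=
  (∫ s in (0:ℝ)..x, Real.exp (-s) * s ^ (n - 1)) / (Nat.factorial (n - 1))

open Real Finset
open scoped Nat

noncomputable def expPartialSum (n : ℕ) (x : ℝ) : ℝ := ∑ k ∈ range n, x ^ k / k !

lemma expPartialSum_succ (n : ℕ) (x : ℝ) :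
    expPartialSum (n + 1) x = expPartialSum n x + x ^ n / n ! :=
  sum_range_succ _ _

lemma expPartialSum_succ_zero (n : ℕ) : expPartialSum (n + 1) 0 = 1 := by
  simp [expPartialSum, sum_range_succ']

lemma hasDerivAt_expPartialSum_succ (n : ℕ) (x : ℝ) :
    HasDerivAt (expPartialSum (n + 1)) (expPartialSum n x) x := by
  induction n with
  | zero =>
    have hone : expPartialSum 1 = fun _ => 1 := funext fun _ => by simp [expPartialSum]
    simpa [hone, expPartialSum] using hasDerivAt_const x (1 : ℝ)
  | succ n ih =>
    have hterm : HasDerivAt (fun x : ℝ => x ^ (n + 1) / (n + 1)!) (x ^ n / n !) x := by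
      refine ((hasDerivAt_pow (n + 1) x).div_const ((n + 1)! : ℝ)).congr_deriv ?_
      push_cast [Nat.factorial_succ, add_tsub_cancel_right]
      field_simp
    have hsucc : expPartialSum (n + 2) = fun x => expPartialSum (n + 1) x + x ^ (n + 1) / (n + 1)! :=
      funext (expPartialSum_succ _)
    rw [hsucc, expPartialSum_succ]
    exact ih.add hterm

lemma hasDerivAt_neg_exp_neg_mul_expPartialSum (n : ℕ) (x : ℝ) :
    HasDerivAt (fun s => -(exp (-s) * expPartialSum (n + 1) s)) (exp (-x) * x ^ n / n !) x := by
  refine ((hasDerivAt_neg x).exp.mul (hasDerivAt_expPartialSum_succ n x)).neg.congr_deriv ?_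
  rw [expPartialSum_succ]
  ring

lemma normIncGamma_succ (n : ℕ) (x : ℝ) :
    normIncGamma (n + 1) x = 1 - exp (-x) * expPartialSum (n + 1) x := by
  have hcont : Continuous fun s : ℝ => exp (-s) * s ^ n / n ! := by fun_prop
  rw [normIncGamma, add_tsub_cancel_right, ← intervalIntegral.integral_div,
    intervalIntegral.integral_eq_sub_of_hasDerivAt
      (fun s _ => hasDerivAt_neg_exp_neg_mul_expPartialSum n s) (hcont.intervalIntegrable _ _)]
  simp only [neg_zero, exp_zero, expPartialSum_succ_zero, mul_one, sub_neg_eq_add]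
  ring

lemma eq_of_hasDerivAt_eq_sub_mul_self {g x y : ℝ → ℝ} {c t₀ : ℝ}
    (hx : ∀ t, HasDerivAt x (g t - c * x t) t) (hy : ∀ t, HasDerivAt y (g t - c * y t) t)
    (h₀ : x t₀ = y t₀) : x = y := by
  have hlip : ∀ t, LipschitzOnWith ‖c‖₊ (fun z => g t - c * z) Set.univ := fun t =>
    (LipschitzWith.of_dist_le_mul fun a b => by
      rw [Real.dist_eq, Real.dist_eq, sub_sub_sub_cancel_left, ← mul_sub, abs_mul, abs_sub_comm]
      rfl).lipschitzOnWith
  exact ODE_solution_unique_univ hlip (fun t => ⟨hx t, trivial⟩) (fun t => ⟨hy t, trivial⟩) h₀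

noncomputable def perturbedFactor (n : ℕ) (β ε t : ℝ) : ℝ :=
  expPartialSum n (β * t) + (-β / ε) ^ n * (exp (-ε * t) - expPartialSum n (-ε * t))

lemma perturbedFactor_zero (n : ℕ) (β ε : ℝ) : perturbedFactor (n + 1) β ε 0 = 1 := by
  simp [perturbedFactor, expPartialSum_succ_zero]

lemma perturbedFactor_eq_sum {ε : ℝ} (hε : ε ≠ 0) (n : ℕ) (β t : ℝ) :
    perturbedFactor n β ε t = (-β / ε) ^ n * exp (-ε * t) + ∑ k ∈ range n,
      (ε ^ (n - k) - (-β) ^ (n - k)) * (β * t) ^ k / (ε ^ (n - k) * k !) := by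
  have hterm : ∀ k ∈ range n, ((β * t) ^ k / k !) - (-β / ε) ^ n * ((-ε * t) ^ k / k !)
      = (ε ^ (n - k) - (-β) ^ (n - k)) * (β * t) ^ k / (ε ^ (n - k) * k !) := fun k hk => by
    obtain ⟨j, rfl⟩ := Nat.exists_eq_add_of_le (mem_range.mp hk).le
    have hcoeff : (ε ^ j - (-β) ^ j) / ε ^ j = 1 - (-β / ε) ^ j := by
      rw [div_pow, sub_div, div_self (pow_ne_zero _ hε)]
    have hrt : (-β / ε) * (-ε * t) = β * t := by field_simp
    rw [add_tsub_cancel_left, mul_div_mul_comm, hcoeff]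
    generalize -β / ε = r at hrt ⊢
    rw [← hrt]
    ring
  rw [← sum_congr rfl hterm, sum_sub_distrib, ← mul_sum, perturbedFactor, expPartialSum, expPartialSum]
  ring

lemma hasDerivAt_perturbedFactor {ε : ℝ} (hε : ε ≠ 0) (n : ℕ) (β t : ℝ) :
    HasDerivAt (perturbedFactor (n + 1) β ε)
      ((β + ε) * expPartialSum (n + 1) (β * t) - ε * perturbedFactor (n + 1) β ε t) t := by
  have hdiag : ε * (-β / ε) ^ (n + 1) * (-ε * t) ^ n = -β * (β * t) ^ n := by
    have hr : ε * (-β / ε) = -β := mul_div_cancel₀ _ hε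
    have hrt : (-β / ε) * (-ε * t) = β * t := by field_simp
    generalize -β / ε = r at hr hrt ⊢
    rw [← hrt, ← hr]
    ring
  have hβt := (hasDerivAt_expPartialSum_succ n (β * t)).comp t ((hasDerivAt_id t).const_mul β)
  have hεt := (hasDerivAt_expPartialSum_succ n (-ε * t)).comp t ((hasDerivAt_id t).const_mul (-ε))
  have hexp := ((hasDerivAt_id t).const_mul (-ε)).exp
  refine (hβt.add ((hexp.sub hεt).const_mul ((-β / ε) ^ (n + 1)))).congr_deriv ?_
  rw [perturbedFactor, expPartialSum_succ, expPartialSum_succ]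
  simp only [id, mul_one]
  linear_combination (-1 / n !) * hdiag

lemma hasDerivAt_one_sub_exp_mul_perturbedFactor {ε : ℝ} (hε : ε ≠ 0) (n : ℕ) (β t : ℝ) :
    HasDerivAt (fun t => 1 - exp (-β * t) * perturbedFactor (n + 1) β ε t)
      ((β + ε) * normIncGamma (n + 1) (β * t)
        - (β + ε) * (1 - exp (-β * t) * perturbedFactor (n + 1) β ε t)) t := by
  have hexp := ((hasDerivAt_id t).const_mul (-β)).exp
  refine ((hasDerivAt_const t 1).sub (hexp.mul (hasDerivAt_perturbedFactor hε n β t))).congr_deriv ?_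
  rw [normIncGamma_succ, ← neg_mul]
  simp only [id, mul_one]
  ring

theorem perturbed_output_constant_stimulus_general
    (n : ℕ) (hn : 1 ≤ n) (α : ℕ → ℝ) (β ε : ℝ)
    (hε : ε ≠ 0) (hβε : β + ε ≠ 0)
    (x : ℝ → ℝ) (h0 : x 0 = 0)
    (hx : ∀ t : ℝ, HasDerivAt x
      (α (n + 1) * ((∏ j ∈ Finset.Icc 1 n, α j) / β ^ n) * normIncGamma n (β * t)
        - (β + ε) * x t) t) :
    ∀ t : ℝ, x t = (α (n + 1) / (β + ε)) * ((∏ j ∈ Finset.Icc 1 n, α j) / β ^ n) *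
      (1 - Real.exp (-β * t) * ((-β / ε) ^ n * Real.exp (-ε * t)
        + ∑ k ∈ Finset.range n,
            (ε ^ (n - k) - (-β) ^ (n - k)) * (β * t) ^ k / (ε ^ (n - k) * Nat.factorial k))) := by
  obtain ⟨m, rfl⟩ : ∃ m, n = m + 1 := ⟨n - 1, by omega⟩
  set C := α (m + 1 + 1) * ((∏ j ∈ Finset.Icc 1 (m + 1), α j) / β ^ (m + 1))
  set y : ℝ → ℝ := fun t => C / (β + ε) * (1 - exp (-β * t) * perturbedFactor (m + 1) β ε t)
  have hy : ∀ t, HasDerivAt y (C * normIncGamma (m + 1) (β * t) - (β + ε) * y t) t := fun t =>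
    ((hasDerivAt_one_sub_exp_mul_perturbedFactor hε m β t).const_mul _).congr_deriv
      (by simp only [y]; field_simp)
  have hxy : x = y :=
    eq_of_hasDerivAt_eq_sub_mul_self hx hy (t₀ := 0) (by simp [y, h0, perturbedFactor_zero])
  intro t
  rw [hxy, ← perturbedFactor_eq_sum hε]
  ring

/-- solution for the ε-perturbed output protein of a reordered cascade under
constant stimulus. -/
theorem perturbed_output_constant_stimulus
    (n : ℕ) (hn : 1 ≤ n) (α : ℕ → ℝ) (β ε : ℝ)
    (hβ : β ≠ 0) (hε : ε ≠ 0) (hβε : β + ε ≠ 0)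
    (x : ℝ → ℝ) (h0 : x 0 = 0)
    (hx : ∀ t : ℝ, HasDerivAt x
      (α (n + 1) * ((∏ j ∈ Finset.Icc 1 n, α j) / β ^ n) * normIncGamma n (β * t)
        - (β + ε) * x t) t) :
    ∀ t : ℝ, x t = (α (n + 1) / (β + ε)) * ((∏ j ∈ Finset.Icc 1 n, α j) / β ^ n) *
      (1 - Real.exp (-β * t) * ((-β / ε) ^ n * Real.exp (-ε * t)
        + ∑ k ∈ Finset.range n,
            (ε ^ (n - k) - (-β) ^ (n - k)) * (β * t) ^ k / (ε ^ (n - k) * Nat.factorial k))) :=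
  perturbed_output_constant_stimulus_general n hn α β ε hε hβε x h0 hx
end
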